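/- Let a₁, a₂, a₃ ∈ Aut(T) be defined recursively by a₁ = σ, a₃ = (a₂, a₃), a₂ = (a₃⁻¹, a₂⁻¹)σ (so a₁a₂a₃ = id). Then a₁ has order 2 and a₂ and a₃ each have order 4. -/

import Mathlib

open Equiv

/-- Vertices of the infinite rooted binary tree: finite words over `Bool`.
The parent of a nonempty word is `dropLast`. -/
abbrev Wd := List Bool

/-- The group `Ω = Aut(T)` of automorphisms of the infinite rooted binary tree,
realized as the subgroup of permutations of the vertex set preserving length
(levels) and the parent relation. -/
def OmegaSG : Subgroup (Equiv.Perm Wd) where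
  carrier := {σ | (∀ w, (σ w).length = w.length) ∧ ∀ w, (σ w).dropLast = σ w.dropLast}
  one_mem' := ⟨fun _ => rfl, fun _ => rfl⟩
  mul_mem' := by
    rintro σ τ ⟨hσl, hσd⟩ ⟨hτl, hτd⟩
    refine ⟨fun w => ?_, fun w => ?_⟩
    · simp [Equiv.Perm.mul_apply, hσl, hτl]
    · simp [Equiv.Perm.mul_apply, hσd, hτd]
  inv_mem' := by
    rintro σ ⟨hl, hd⟩
    refine ⟨fun w => ?_, fun w => ?_⟩
    · have := hl (σ⁻¹ w)
      rw [show σ (σ⁻¹ w) = w from σ.apply_symm_apply w] at this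
      exact this.symm
    · apply σ.injective
      have := hd (σ⁻¹ w)
      rw [show σ (σ⁻¹ w) = w from σ.apply_symm_apply w] at this
      rw [← this]
      simp

/-- The section pairing: `(u,v)` acts as `u` on the subtree rooted at `false`
and as `v` on the subtree rooted at `true`. -/
def pairFun (f g : Wd → Wd) : Wd → Wd
  | [] => []
  | false :: w => false :: f w
  | true :: w => true :: g w

@[simp] lemma pairFun_nil (f g : Wd → Wd) : pairFun f g [] = [] := rfl
@[simp] lemma pairFun_false (f g : Wd → Wd) (w : Wd) :
    pairFun f g (false :: w) = false :: f w := rfl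
@[simp] lemma pairFun_true (f g : Wd → Wd) (w : Wd) :
    pairFun f g (true :: w) = true :: g w := rfl

lemma pairFun_comp (f g f' g' : Wd → Wd) (hf : ∀ w, f (f' w) = w) (hg : ∀ w, g (g' w) = w) :
    ∀ w, pairFun f g (pairFun f' g' w) = w := by
  rintro (_ | ⟨(_|_), w⟩) <;> simp [hf, hg]

/-- The permutation `(u,v)` of the tree. -/
def pairPerm (u v : Equiv.Perm Wd) : Equiv.Perm Wd where
  toFun := pairFun u v
  invFun := pairFun u.symm v.symm
  left_inv := pairFun_comp _ _ _ _ (fun w => u.symm_apply_apply w) (fun w => v.symm_apply_apply w)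
  right_inv := pairFun_comp _ _ _ _ (fun w => u.apply_symm_apply w) (fun w => v.apply_symm_apply w)

@[simp] lemma pairPerm_apply (u v : Equiv.Perm Wd) (w : Wd) :
    pairPerm u v w = pairFun u v w := rfl

/-- The first-level swap `σ`. -/
def swapPerm : Equiv.Perm Wd where
  toFun w := match w with | [] => [] | b :: w => (!b) :: w
  invFun w := match w with | [] => [] | b :: w => (!b) :: w
  left_inv := by rintro (_ | ⟨b, w⟩) <;> simp
  right_inv := by rintro (_ | ⟨b, w⟩) <;> simp

@[simp] lemma swapPerm_nil : swapPerm [] = [] := rfl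
@[simp] lemma swapPerm_cons (b : Bool) (w : Wd) : swapPerm (b :: w) = (!b) :: w := rfl

lemma swapPerm_mem : swapPerm ∈ OmegaSG := by
  constructor
  · rintro (_ | ⟨b, w⟩) <;> simp
  · rintro (_ | ⟨b, w⟩)
    · simp
    · rcases eq_or_ne w [] with rfl | hw
      · simp
      · simp only [swapPerm_cons, List.dropLast_cons_of_ne_nil hw]

lemma mem_omega_length {u : Equiv.Perm Wd} (hu : u ∈ OmegaSG) (w : Wd) :
    (u w).length = w.length := hu.1 w

lemma mem_omega_ne_nil {u : Equiv.Perm Wd} (hu : u ∈ OmegaSG) {w : Wd} (hw : w ≠ []) :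
    u w ≠ [] := by
  intro h
  exact hw (List.eq_nil_of_length_eq_zero (by rw [← hu.1 w, h]; rfl))

lemma mem_omega_nil {u : Equiv.Perm Wd} (hu : u ∈ OmegaSG) : u [] = [] :=
  List.eq_nil_of_length_eq_zero (hu.1 [])

lemma pairPerm_mem {u v : Equiv.Perm Wd} (hu : u ∈ OmegaSG) (hv : v ∈ OmegaSG) :
    pairPerm u v ∈ OmegaSG := by
  constructor
  · rintro (_ | ⟨(_|_), w⟩) <;> simp [hu.1, hv.1]
  · rintro (_ | ⟨(_|_), w⟩)
    · simp
    · rcases eq_or_ne w [] with rfl | hw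
      · simp [mem_omega_nil hu]
      · simp only [pairPerm_apply, pairFun_false, List.dropLast_cons_of_ne_nil hw,
          List.dropLast_cons_of_ne_nil (mem_omega_ne_nil hu hw)]
        rw [hu.2]
    · rcases eq_or_ne w [] with rfl | hw
      · simp [mem_omega_nil hv]
      · simp only [pairPerm_apply, pairFun_true, List.dropLast_cons_of_ne_nil hw,
          List.dropLast_cons_of_ne_nil (mem_omega_ne_nil hv hw)]
        rw [hv.2]

/-- `(u,v)` as an element of `Ω`. -/
def pairOm (u v : OmegaSG) : OmegaSG := ⟨pairPerm u.1 v.1, pairPerm_mem u.2 v.2⟩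

/-- `σ` as an element of `Ω`. -/
def swapOm : OmegaSG := ⟨swapPerm, swapPerm_mem⟩

/-! ### Levels, restriction, sign, odometers -/

/-- Level `n` of the tree: words of length `n`. -/
abbrev Lv (n : ℕ) := {w : Wd // w.length = n}

instance fintypeLv (n : ℕ) : Fintype (Lv n) := by
  apply Fintype.ofSurjective (fun g : Fin n → Bool => (⟨List.ofFn g, List.length_ofFn⟩ : Lv n))
  rintro ⟨w, rfl⟩
  exact ⟨w.get, Subtype.ext (List.ofFn_get w)⟩

/-- The permutation induced by `g ∈ Ω` on level `n`. -/
def levelPerm (n : ℕ) (g : OmegaSG) : Equiv.Perm (Lv n) where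
  toFun w := ⟨g.1 w.1, by rw [mem_omega_length g.2, w.2]⟩
  invFun w := ⟨(g⁻¹ : OmegaSG).1 w.1, by rw [mem_omega_length (g⁻¹ : OmegaSG).2, w.2]⟩
  left_inv w := Subtype.ext (by simp)
  right_inv w := Subtype.ext (by simp)

/-- Restriction to level `n` as a group homomorphism. -/
def levelHom (n : ℕ) : OmegaSG →* Equiv.Perm (Lv n) where
  toFun := levelPerm n
  map_one' := Equiv.ext fun w => Subtype.ext rfl
  map_mul' g h := Equiv.ext fun w => Subtype.ext rfl

/-- `sgn_n`: the sign of the permutation induced on level `n`. -/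
noncomputable def sgn (n : ℕ) (g : OmegaSG) : ℤˣ := Equiv.Perm.sign (levelPerm n g)

/-- An odometer: an element acting transitively on every level of the tree. -/
def IsOdometer (g : OmegaSG) : Prop :=
  ∀ n : ℕ, ∀ v w : Lv n, ∃ k : ℤ, ((g ^ k : OmegaSG) : Equiv.Perm Wd) v.1 = w.1

/-! ### The profinite topology on `Aut(T)` -/

instance : TopologicalSpace Wd := ⊥
instance : DiscreteTopology Wd := ⟨rfl⟩
instance : TopologicalSpace (Equiv.Perm Wd) :=
  TopologicalSpace.induced (fun g => (g : Wd → Wd)) Pi.topologicalSpace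

lemma continuous_permCoe : Continuous (fun g : Equiv.Perm Wd => (g : Wd → Wd)) :=
  continuous_induced_dom

lemma continuous_permApply (w : Wd) : Continuous fun g : Equiv.Perm Wd => g w :=
  (continuous_apply w).comp continuous_permCoe

instance : IsTopologicalGroup (Equiv.Perm Wd) where
  continuous_mul := by
    apply continuous_induced_rng.2
    apply continuous_pi
    intro w
    rw [continuous_discrete_rng]
    intro y
    have h : (fun p : Equiv.Perm Wd × Equiv.Perm Wd => ((p.1 * p.2 : Equiv.Perm Wd) : Wd → Wd) w) ⁻¹' {y}
        = ⋃ x : Wd, {p : Equiv.Perm Wd × Equiv.Perm Wd | p.2 w = x} ∩ {p | p.1 x = y} := by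
      ext p
      simp only [Set.mem_preimage, Set.mem_singleton_iff, Set.mem_iUnion, Set.mem_inter_iff,
        Set.mem_setOf_eq, Equiv.Perm.mul_apply]
      constructor
      · intro hh; exact ⟨p.2 w, rfl, hh⟩
      · rintro ⟨x, rfl, hh⟩; exact hh
    show IsOpen ((fun p : Equiv.Perm Wd × Equiv.Perm Wd =>
      ((p.1 * p.2 : Equiv.Perm Wd) : Wd → Wd) w) ⁻¹' {y})
    rw [h]
    refine isOpen_iUnion fun x => IsOpen.inter ?_ ?_
    · exact IsOpen.preimage ((continuous_permApply w).comp continuous_snd) (isOpen_discrete {x})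
    · exact IsOpen.preimage ((continuous_permApply x).comp continuous_fst) (isOpen_discrete {y})
  continuous_inv := by
    apply continuous_induced_rng.2
    apply continuous_pi
    intro w
    rw [continuous_discrete_rng]
    intro y
    have h : (fun g : Equiv.Perm Wd => ((g⁻¹ : Equiv.Perm Wd) : Wd → Wd) w) ⁻¹' {y}
        = {g : Equiv.Perm Wd | g y = w} := by
      ext g
      simp only [Set.mem_preimage, Set.mem_singleton_iff, Set.mem_setOf_eq]
      constructor
      · rintro rfl; simp
      · intro hh; rw [← hh]; simp
    show IsOpen ((fun g : Equiv.Perm Wd => ((g⁻¹ : Equiv.Perm Wd) : Wd → Wd) w) ⁻¹' {y})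
    rw [h]
    exact IsOpen.preimage (continuous_permApply y) (isOpen_discrete {w})

/-! ### The recursive generators `a₁ = σ`, `a₂ = (a₃⁻¹, a₂⁻¹)σ`, `a₃ = (a₂, a₃)` -/

mutual
  /-- The underlying function of `a₂`. -/
  def pA : Wd → Wd
    | [] => []
    | false :: w => true :: piA w
    | true :: w => false :: qiA w
  /-- The underlying function of `a₃`. -/
  def qA : Wd → Wd
    | [] => []
    | false :: w => false :: pA w
    | true :: w => true :: qA w
  /-- The underlying function of `a₂⁻¹`. -/
  def piA : Wd → Wd
    | [] => []
    | false :: w => true :: qA w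
    | true :: w => false :: pA w
  /-- The underlying function of `a₃⁻¹`. -/
  def qiA : Wd → Wd
    | [] => []
    | false :: w => false :: piA w
    | true :: w => true :: qiA w
end

lemma a_inv_lemma : ∀ w : Wd, pA (piA w) = w ∧ piA (pA w) = w ∧ qA (qiA w) = w ∧ qiA (qA w) = w := by
  intro w
  induction w with
  | nil => simp [pA, qA, piA, qiA]
  | cons b w ih =>
    cases b <;>
      simp [pA, qA, piA, qiA, ih.1, ih.2.1, ih.2.2.1, ih.2.2.2]

/-- The generator `a₂`. -/
def a2 : Equiv.Perm Wd where
  toFun := pA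
  invFun := piA
  left_inv w := (a_inv_lemma w).2.1
  right_inv w := (a_inv_lemma w).1

/-- The generator `a₃`. -/
def a3 : Equiv.Perm Wd where
  toFun := qA
  invFun := qiA
  left_inv w := (a_inv_lemma w).2.2.2
  right_inv w := (a_inv_lemma w).2.2.1

lemma a_length_lemma : ∀ w : Wd, (pA w).length = w.length ∧ (qA w).length = w.length ∧
    (piA w).length = w.length ∧ (qiA w).length = w.length := by
  intro w
  induction w with
  | nil => simp [pA, qA, piA, qiA]
  | cons b w ih =>
    cases b <;>
      simp [pA, qA, piA, qiA, ih.1, ih.2.1, ih.2.2.1, ih.2.2.2]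

lemma a_ne_nil {f : Wd → Wd} (hf : ∀ w : Wd, (f w).length = w.length) {w : Wd} (hw : w ≠ []) :
    f w ≠ [] := by
  intro h
  exact hw (List.eq_nil_of_length_eq_zero (by rw [← hf w, h]; rfl))

lemma a_dropLast_lemma : ∀ w : Wd, (pA w).dropLast = pA w.dropLast ∧
    (qA w).dropLast = qA w.dropLast ∧ (piA w).dropLast = piA w.dropLast ∧
    (qiA w).dropLast = qiA w.dropLast := by
  intro w
  induction w with
  | nil => simp [pA, qA, piA, qiA]
  | cons b w ih =>
    rcases eq_or_ne w [] with rfl | hw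
    · cases b <;> simp [pA, qA, piA, qiA]
    · have hp := a_ne_nil (fun w => (a_length_lemma w).1) hw
      have hq := a_ne_nil (fun w => (a_length_lemma w).2.1) hw
      have hpi := a_ne_nil (fun w => (a_length_lemma w).2.2.1) hw
      have hqi := a_ne_nil (fun w => (a_length_lemma w).2.2.2) hw
      cases b <;>
        simp [pA, qA, piA, qiA, List.dropLast_cons_of_ne_nil hw,
          List.dropLast_cons_of_ne_nil hp, List.dropLast_cons_of_ne_nil hq,
          List.dropLast_cons_of_ne_nil hpi, List.dropLast_cons_of_ne_nil hqi,
          ih.1, ih.2.1, ih.2.2.1, ih.2.2.2]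

lemma a2_mem : a2 ∈ OmegaSG :=
  ⟨fun w => (a_length_lemma w).1, fun w => (a_dropLast_lemma w).1⟩

lemma a3_mem : a3 ∈ OmegaSG :=
  ⟨fun w => (a_length_lemma w).2.1, fun w => (a_dropLast_lemma w).2.1⟩

/-- `a₁ = σ` as an element of `Ω`. -/
def A1 : OmegaSG := swapOm
/-- `a₂` as an element of `Ω`. -/
def A2 : OmegaSG := ⟨a2, a2_mem⟩
/-- `a₃` as an element of `Ω`. -/
def A3 : OmegaSG := ⟨a3, a3_mem⟩

/-- `G = ⟨⟨a₁, a₃⟩⟩`, the topological closure of the subgroup generated by `a₁` and `a₃`: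
a model of the geometric iterated monodromy group of `f(x) = 2/(x-1)²`. -/
noncomputable def Ggrp : Subgroup OmegaSG :=
  (Subgroup.closure {A1, A3}).topologicalClosure

/-- The normal closure in `G` of the closed subgroup generated by an element `c`:
the closed subgroup generated by all `G`-conjugates of `c`. -/
noncomputable def nclG (c : OmegaSG) : Subgroup OmegaSG :=
  (Subgroup.closure {x | ∃ g ∈ Ggrp, x = g * c * g⁻¹}).topologicalClosure

/-- `U`, the normal closure in `G` of `⟨⟨a₂a₃⁻¹⟩⟩`. -/
noncomputable def Ugrp : Subgroup OmegaSG := nclG (A2 * A3⁻¹)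

/-- `H₁`, the normal closure in `G` of `⟨⟨a₁⟩⟩`. -/
noncomputable def H1grp : Subgroup OmegaSG := nclG A1

/-- `H₃`, the normal closure in `G` of `⟨⟨a₃⟩⟩`. -/
noncomputable def H3grp : Subgroup OmegaSG := nclG A3

/-!
Since `σ (u, v) σ = (v, u)`, the recursions give `a₁a₂a₃ = σ(a₃⁻¹, a₂⁻¹)σ(a₂, a₃) = 1` and
`a₂² = (a₃⁻¹a₂⁻¹, a₂⁻¹a₃⁻¹) = (a₁, a₃a₁a₃⁻¹)`, a pair of involutions with nontrivial first
coordinate, so `a₂` has order 4. For `a₃ = (a₂, a₃)` we get `a₃⁴ = (1, a₃⁴)`, and an element with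
`g = (1, g)` fixes every vertex, so `a₃⁴ = 1`; while `a₃² = (a₂², a₃²) ≠ 1`.
-/

def pairHom : OmegaSG × OmegaSG →* OmegaSG where
  toFun p := pairOm p.1 p.2
  map_one' := Subtype.ext <| Equiv.ext <| by rintro (_ | ⟨(_ | _), w⟩) <;> rfl
  map_mul' _ _ := Subtype.ext <| Equiv.ext <| by rintro (_ | ⟨(_ | _), w⟩) <;> rfl

lemma pairOm_mul (u v u' v' : OmegaSG) :
    pairOm u v * pairOm u' v' = pairOm (u * u') (v * v') :=
  (map_mul pairHom (u, v) (u', v')).symm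

lemma pairOm_one : pairOm 1 1 = 1 :=
  map_one pairHom

lemma pairOm_pow (u v : OmegaSG) (n : ℕ) : pairOm u v ^ n = pairOm (u ^ n) (v ^ n) :=
  (map_pow pairHom (u, v) n).symm

lemma eq_one_of_pairOm_eq_one {u v : OmegaSG} (h : pairOm u v = 1) : u = 1 :=
  Subtype.ext <| Equiv.ext fun w =>
    List.cons_injective (congrArg (fun g : OmegaSG => g.1 (false :: w)) h)

lemma swapOm_mul_pairOm (u v : OmegaSG) : swapOm * pairOm u v = pairOm v u * swapOm :=
  Subtype.ext <| Equiv.ext <| by rintro (_ | ⟨(_ | _), w⟩) <;> rfl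

lemma swapOm_mul_self : swapOm * swapOm = 1 :=
  Subtype.ext <| Equiv.ext <| by rintro (_ | ⟨(_ | _), w⟩) <;> rfl

lemma swapOm_ne_one : swapOm ≠ 1 := fun h =>
  absurd (congrArg (fun g : OmegaSG => g.1 [false]) h : ([true] : Wd) = [false]) (by decide)

lemma eq_one_of_eq_pairOm_one {g : OmegaSG} (hg : g = pairOm 1 g) : g = 1 := by
  refine Subtype.ext <| Equiv.ext fun w => ?_
  induction w with
  | nil => exact mem_omega_nil g.2
  | cons b w ih =>
    rw [hg]
    cases b
    · rfl
    · exact congrArg (true :: ·) ih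

lemma pow_eq_one_of_eq_pairOm {g u : OmegaSG} {n : ℕ} (hg : g = pairOm u g) (hu : u ^ n = 1) :
    g ^ n = 1 := by
  refine eq_one_of_eq_pairOm_one ?_
  conv_lhs => rw [hg]
  rw [pairOm_pow, hu]

lemma orderOf_eq_four {G : Type*} [Monoid G] {g : G} (h2 : g ^ 2 ≠ 1) (h4 : g ^ 4 = 1) :
    orderOf g = 4 :=
  haveI := Fact.mk Nat.prime_two
  orderOf_eq_prime_pow (p := 2) (n := 1) (by simpa using h2) (by simpa using h4)

lemma A3_eq_pairOm : A3 = pairOm A2 A3 :=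
  Subtype.ext <| Equiv.ext <| by rintro (_ | ⟨(_ | _), w⟩) <;> rfl

lemma A2_eq_pairOm_mul_swapOm : A2 = pairOm A3⁻¹ A2⁻¹ * swapOm :=
  Subtype.ext <| Equiv.ext <| by rintro (_ | ⟨(_ | _), w⟩) <;> rfl

lemma A1_mul_A2_mul_A3 : A1 * A2 * A3 = 1 :=
  calc A1 * A2 * A3 = swapOm * pairOm A3⁻¹ A2⁻¹ * swapOm * A3 := by
        rw [A1]
        conv_lhs => rw [A2_eq_pairOm_mul_swapOm]
        simp only [mul_assoc]
    _ = pairOm A2⁻¹ A3⁻¹ * pairOm A2 A3 := by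
        rw [swapOm_mul_pairOm, mul_assoc _ swapOm swapOm, swapOm_mul_self, mul_one,
          ← A3_eq_pairOm]
    _ = 1 := by rw [pairOm_mul, inv_mul_cancel, inv_mul_cancel, pairOm_one]

lemma A1_sq : A1 ^ 2 = 1 := by
  rw [sq, A1, swapOm_mul_self]

lemma A2_sq : A2 ^ 2 = pairOm A1 (A3 * A1 * A3⁻¹) := by
  have hA1 : (A2 * A3)⁻¹ = A1 :=
    inv_eq_of_mul_eq_one_left (by rw [← mul_assoc]; exact A1_mul_A2_mul_A3)
  calc A2 ^ 2 = pairOm A3⁻¹ A2⁻¹ * (swapOm * pairOm A3⁻¹ A2⁻¹) * swapOm := by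
        conv_lhs => rw [sq, A2_eq_pairOm_mul_swapOm]
        simp only [mul_assoc]
    _ = pairOm (A3⁻¹ * A2⁻¹) (A2⁻¹ * A3⁻¹) := by
        simp only [swapOm_mul_pairOm, mul_assoc, swapOm_mul_self, mul_one, pairOm_mul]
    _ = pairOm A1 (A3 * A1 * A3⁻¹) := by
        rw [← hA1, ← mul_inv_rev]
        congr 1
        group

lemma A2_pow_four : A2 ^ 4 = 1 := by
  rw [show 4 = 2 * 2 from rfl, pow_mul, A2_sq, pairOm_pow, conj_pow, A1_sq, mul_one,
    mul_inv_cancel, pairOm_one]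

lemma A2_sq_ne_one : A2 ^ 2 ≠ 1 := fun h =>
  swapOm_ne_one (eq_one_of_pairOm_eq_one (A2_sq ▸ h))

lemma A3_sq_ne_one : A3 ^ 2 ≠ 1 := fun h => by
  rw [A3_eq_pairOm, pairOm_pow] at h
  exact A2_sq_ne_one (eq_one_of_pairOm_eq_one h)

/-- The recursively defined `a₁ = σ`, `a₃ = (a₂,a₃)`,
`a₂ = (a₃⁻¹,a₂⁻¹)σ` (so that `a₁a₂a₃ = id`) satisfy: `a₁` has order 2 and
`a₂`, `a₃` each have order 4. -/
theorem stmt5 :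
    A1 = swapOm ∧ A3 = pairOm A2 A3 ∧ A2 = pairOm A3⁻¹ A2⁻¹ * swapOm ∧
    A1 * A2 * A3 = 1 ∧
    orderOf A1 = 2 ∧ orderOf A2 = 4 ∧ orderOf A3 = 4 := by
  have := Fact.mk Nat.prime_two
  refine ⟨rfl, A3_eq_pairOm, A2_eq_pairOm_mul_swapOm, A1_mul_A2_mul_A3,
    orderOf_eq_prime A1_sq swapOm_ne_one, orderOf_eq_four A2_sq_ne_one A2_pow_four,
    orderOf_eq_four A3_sq_ne_one (pow_eq_one_of_eq_pairOm A3_eq_pairOm A2_pow_four)⟩
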